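/- arXiv:1202.2587 — 4 statements merged into one kernel-verified Lean document; each statement's English description precedes it below -/
import Mathlib

section
/- Let Q be a finite n×n matrix with nonnegative entries which is symmetrizable (π(z)Q(z,z') = π(z')Q(z',z) for a positive weight π) and substochastic, such that every row sum of Q^n is strictly less than 1. Then the operator norm of Q on ℓ²(π) is strictly less than 1. -/
/-!
Conjugating by `D = diag (√π)` turns `Q` into the symmetric matrix `A = D Q D⁻¹`, and `f ↦ D f`
is an isometry from `ℓ²(π)` onto Euclidean space, so the norm of `Q` on `ℓ²(π)` is the `ℓ²`
operator norm `‖A‖`. The Schur test turns the row sum bound on `Q ^ n` into `‖A ^ n‖ < 1`.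
Finally, in a C⋆-ring a self-adjoint `a` satisfies `‖a ^ 2 ^ k‖ = ‖a‖ ^ 2 ^ k`; taking `2 ^ k > n`,
`‖a‖ ≥ 1` would give `‖a‖ ^ 2 ^ k ≤ ‖a ^ n‖ * ‖a‖ ^ (2 ^ k - n) < ‖a‖ ^ 2 ^ k`.
-/

open scoped BigOperators

/-- The norm on `ℓ²(V, π)` for a finite set `V` with positive weights `π`. -/
noncomputable def piNorm {V : Type*} [Fintype V] (π : V → ℝ) (f : V → ℝ) : ℝ :=
  Real.sqrt (∑ z, π z * f z ^ 2)

open Matrix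
open scoped Matrix.Norms.L2Operator

theorem IsSelfAdjoint.norm_lt_one_of_norm_pow_lt_one {E : Type*} [NormedRing E] [StarRing E]
    [CStarRing E] {a : E} (ha : IsSelfAdjoint a) {n : ℕ} (hn : ‖a ^ n‖ < 1) : ‖a‖ < 1 := by
  by_contra! h
  obtain ⟨k, hk⟩ : ∃ k, n < 2 ^ k := ⟨n, Nat.lt_two_pow_self⟩
  have hpos : 0 < ‖a‖ := one_pos.trans_le h
  refine lt_irrefl (‖a‖ ^ 2 ^ k) ?_
  calc ‖a‖ ^ 2 ^ k = ‖a ^ n * a ^ (2 ^ k - n)‖ := by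
        rw [← ha.norm_pow_two_pow, ← pow_add, Nat.add_sub_cancel' hk.le]
    _ ≤ ‖a ^ n‖ * ‖a‖ ^ (2 ^ k - n) := by
        grw [norm_mul_le, norm_pow_le' a (Nat.sub_pos_of_lt hk)]
    _ < ‖a‖ ^ (2 ^ k - n) := mul_lt_of_lt_one_left (pow_pos hpos _) hn
    _ ≤ ‖a‖ ^ 2 ^ k := pow_le_pow_right₀ h (Nat.sub_le _ _)

theorem Finite.exists_mem_Ico_forall_le {ι α : Type*} [Finite ι] [LinearOrder α] {f : ι → α}
    {c a : α} (hc : c < a) (h : ∀ i, f i < a) : ∃ b ∈ Set.Ico c a, ∀ i, f i ≤ b := by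
  cases isEmpty_or_nonempty ι
  · exact ⟨c, ⟨le_rfl, hc⟩, isEmptyElim⟩
  · obtain ⟨i, hi⟩ := Finite.exists_max f
    exact ⟨max c (f i), ⟨le_max_left _ _, max_lt hc (h i)⟩,
      fun j ↦ (hi j).trans (le_max_right _ _)⟩

section Weighted

variable {V : Type*} [Fintype V]

theorem piNorm_le_mul_piNorm_of_sum_le {π f g : V → ℝ} {c : ℝ} (hc : 0 ≤ c)
    (h : ∑ z, π z * g z ^ 2 ≤ c ^ 2 * ∑ z, π z * f z ^ 2) : piNorm π g ≤ c * piNorm π f := by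
  rw [piNorm, piNorm, ← Real.sqrt_sq hc, ← Real.sqrt_mul (sq_nonneg c)]
  exact Real.sqrt_le_sqrt h

theorem sq_mulVec_le_rowSum_mul {M : Matrix V V ℝ} (hM : ∀ z z', 0 ≤ M z z') (f : V → ℝ)
    (z : V) : (M *ᵥ f) z ^ 2 ≤ (∑ z', M z z') * ∑ z', M z z' * f z' ^ 2 :=
  Finset.sum_sq_le_sum_mul_sum_of_sq_le_mul _ (fun z' _ ↦ hM z z')
    (fun z' _ ↦ mul_nonneg (hM z z') (sq_nonneg _)) (fun z' _ ↦ (by ring : _ = _).le)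

theorem piNorm_mulVec_le_of_rowSum_le {π : V → ℝ} (hπ : ∀ z, 0 ≤ π z) {M : Matrix V V ℝ}
    (hM : ∀ z z', 0 ≤ M z z') (hMsym : ∀ z z', π z * M z z' = π z' * M z' z) {r : ℝ}
    (hr : 0 ≤ r) (hrow : ∀ z, ∑ z', M z z' ≤ r) (f : V → ℝ) :
    piNorm π (M *ᵥ f) ≤ r * piNorm π f := by
  refine piNorm_le_mul_piNorm_of_sum_le hr ?_
  calc ∑ z, π z * (M *ᵥ f) z ^ 2
      ≤ ∑ z, π z * (r * ∑ z', M z z' * f z' ^ 2) := by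
        gcongr with z
        · exact hπ z
        · grw [sq_mulVec_le_rowSum_mul hM f z, hrow z]
          exact Finset.sum_nonneg fun z' _ ↦ mul_nonneg (hM z z') (sq_nonneg _)
    _ = r * ∑ z', π z' * (∑ z, M z' z) * f z' ^ 2 := by
        simp only [Finset.mul_sum, Finset.sum_mul]
        rw [Finset.sum_comm]
        refine Finset.sum_congr rfl fun z' _ ↦ Finset.sum_congr rfl fun z _ ↦ ?_
        linear_combination r * f z' ^ 2 * hMsym z z'
    _ ≤ r * ∑ z', π z' * r * f z' ^ 2 := by
        gcongr with z'
        · exact hπ z'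
        · exact hrow z'
    _ = r ^ 2 * ∑ z, π z * f z ^ 2 := by
        simp_rw [Finset.mul_sum]
        exact Finset.sum_congr rfl fun z _ ↦ by ring

variable [DecidableEq V]

noncomputable def symmetrized (π : V → ℝ) (M : Matrix V V ℝ) : Matrix V V ℝ :=
  diagonal (fun z ↦ √(π z)) * M * diagonal (fun z ↦ (√(π z))⁻¹)

theorem diagonal_sqrt_mul_diagonal_inv_sqrt {π : V → ℝ} (hπ : ∀ z, 0 < π z) :
    diagonal (fun z ↦ √(π z)) * diagonal (fun z ↦ (√(π z))⁻¹) = 1 := by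
  simp only [diagonal_mul_diagonal, mul_inv_cancel₀ (Real.sqrt_ne_zero'.2 (hπ _)), diagonal_one]

theorem diagonal_inv_sqrt_mul_diagonal_sqrt {π : V → ℝ} (hπ : ∀ z, 0 < π z) :
    diagonal (fun z ↦ (√(π z))⁻¹) * diagonal (fun z ↦ √(π z)) = 1 := by
  simp only [diagonal_mul_diagonal, inv_mul_cancel₀ (Real.sqrt_ne_zero'.2 (hπ _)), diagonal_one]

theorem symmetrized_apply (π : V → ℝ) (M : Matrix V V ℝ) (z z' : V) :
    symmetrized π M z z' = √(π z) * M z z' / √(π z') := by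
  simp [symmetrized, diagonal_mul, mul_diagonal, div_eq_mul_inv]

theorem isSelfAdjoint_symmetrized_iff {π : V → ℝ} (hπ : ∀ z, 0 < π z) {M : Matrix V V ℝ} :
    IsSelfAdjoint (symmetrized π M) ↔ ∀ z z', π z * M z z' = π z' * M z' z := by
  rw [IsSelfAdjoint, star_eq_conjTranspose, conjTranspose_eq_transpose_of_trivial,
    ← Matrix.ext_iff]
  refine forall_congr' fun z ↦ forall_congr' fun z' ↦ ?_
  rw [transpose_apply, symmetrized_apply, symmetrized_apply,
    div_eq_div_iff (Real.sqrt_ne_zero'.2 (hπ z)) (Real.sqrt_ne_zero'.2 (hπ z')), eq_comm,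
    mul_right_comm, Real.mul_self_sqrt (hπ z).le, mul_right_comm, Real.mul_self_sqrt (hπ z').le]

theorem symmetrized_pow {π : V → ℝ} (hπ : ∀ z, 0 < π z) (M : Matrix V V ℝ) (n : ℕ) :
    symmetrized π (M ^ n) = symmetrized π M ^ n := by
  let u : (Matrix V V ℝ)ˣ :=
    { val := diagonal fun z ↦ √(π z)
      inv := diagonal fun z ↦ (√(π z))⁻¹
      val_inv := diagonal_sqrt_mul_diagonal_inv_sqrt hπ
      inv_val := diagonal_inv_sqrt_mul_diagonal_sqrt hπ }
  exact (u.conj_pow M n).symm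

theorem piNorm_eq_norm_toLp {π : V → ℝ} (hπ : ∀ z, 0 ≤ π z) (f : V → ℝ) :
    piNorm π f = ‖WithLp.toLp 2 (diagonal (fun z ↦ √(π z)) *ᵥ f)‖ := by
  simp [piNorm, EuclideanSpace.norm_eq, mulVec_diagonal, mul_pow, Real.sq_sqrt (hπ _)]

theorem norm_symmetrized_le_iff {π : V → ℝ} (hπ : ∀ z, 0 < π z) {M : Matrix V V ℝ} {c : ℝ}
    (hc : 0 ≤ c) :
    ‖symmetrized π M‖ ≤ c ↔ ∀ f, piNorm π (M *ᵥ f) ≤ c * piNorm π f := by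
  have hπ' : ∀ z, 0 ≤ π z := fun z ↦ (hπ z).le
  set D : Matrix V V ℝ := diagonal fun z ↦ √(π z)
  set D' : Matrix V V ℝ := diagonal fun z ↦ (√(π z))⁻¹
  have hconj : ∀ f, symmetrized π M *ᵥ (D *ᵥ f) = D *ᵥ (M *ᵥ f) := fun f ↦ by
    simp only [symmetrized, D, mulVec_mulVec, mul_assoc,
      diagonal_inv_sqrt_mul_diagonal_sqrt hπ, mul_one]
  rw [cstar_norm_def]
  constructor
  · intro h f
    rw [piNorm_eq_norm_toLp hπ', piNorm_eq_norm_toLp hπ', ← hconj, ← toEuclideanCLM_toLp]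
    exact (ContinuousLinearMap.le_opNorm _ _).trans (by gcongr)
  · intro h
    refine ContinuousLinearMap.opNorm_le_bound _ hc fun x ↦ ?_
    obtain ⟨f, rfl⟩ : ∃ f, x = WithLp.toLp 2 (D *ᵥ f) :=
      ⟨D' *ᵥ x.ofLp, by
        simp only [D, D', mulVec_mulVec, diagonal_sqrt_mul_diagonal_inv_sqrt hπ, one_mulVec]⟩
    rw [toEuclideanCLM_toLp, hconj, ← piNorm_eq_norm_toLp hπ', ← piNorm_eq_norm_toLp hπ']
    exact h f

end Weighted

theorem opNorm_lt_one_of_rowsums_lt_one_general {V : Type*} [Fintype V] [DecidableEq V]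
    (Q : Matrix V V ℝ) (π : V → ℝ)
    (hπpos : ∀ z, 0 < π z)
    (hQnonneg : ∀ z z', 0 ≤ Q z z')
    (hsym : ∀ z z', π z * Q z z' = π z' * Q z' z)
    (hrow : ∀ z, ∑ z', (Q ^ Fintype.card V) z z' < 1) :
    ∃ c : ℝ, c < 1 ∧ ∀ f : V → ℝ, piNorm π (Q.mulVec f) ≤ c * piNorm π f := by
  have hA : IsSelfAdjoint (symmetrized π Q) := (isSelfAdjoint_symmetrized_iff hπpos).2 hsym
  obtain ⟨r, ⟨hr0, hr1⟩, hrow_le⟩ := Finite.exists_mem_Ico_forall_le zero_lt_one hrow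
  have hpow : ‖symmetrized π Q ^ Fintype.card V‖ ≤ r := by
    have hsym_pow := hA.pow (Fintype.card V)
    rw [← symmetrized_pow hπpos, isSelfAdjoint_symmetrized_iff hπpos] at hsym_pow
    rw [← symmetrized_pow hπpos, norm_symmetrized_le_iff hπpos hr0]
    exact piNorm_mulVec_le_of_rowSum_le (fun z ↦ (hπpos z).le) (pow_apply_nonneg hQnonneg _)
      hsym_pow hr0 hrow_le
  exact ⟨_, hA.norm_lt_one_of_norm_pow_lt_one (hpow.trans_lt hr1),
    (norm_symmetrized_le_iff hπpos (norm_nonneg _)).1 le_rfl⟩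

/-- A symmetrizable substochastic `n × n` matrix all of whose `n`-th power row sums are
strictly less than `1` has operator norm on `ℓ²(π)` strictly less than `1`. -/
theorem opNorm_lt_one_of_rowsums_lt_one {V : Type*} [Fintype V] [DecidableEq V]
    (Q : Matrix V V ℝ) (π : V → ℝ)
    (hπpos : ∀ z, 0 < π z)
    (hQnonneg : ∀ z z', 0 ≤ Q z z')
    (hsym : ∀ z z', π z * Q z z' = π z' * Q z' z)
    (hsub : ∀ z, ∑ z', Q z z' ≤ 1)
    (hrow : ∀ z, ∑ z', (Q ^ Fintype.card V) z z' < 1) :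
    ∃ c : ℝ, c < 1 ∧ ∀ f : V → ℝ, piNorm π (Q.mulVec f) ≤ c * piNorm π f :=
  opNorm_lt_one_of_rowsums_lt_one_general Q π hπpos hQnonneg hsym hrow
end

section
/- Let Q be a self-adjoint substochastic operator on ℓ²(V,π) with ‖Q‖ < 1, and let h_x, h_y be nonnegative elements of ℓ²(V,π). Then for every n ≥ 2, ⟨h_x, Q^{n−2} h_y⟩ ≤ (2/n) · ⟨h_x, (I−Q²)^{−1} Q^{2m} h_x⟩^{1/2} · ⟨h_y, (I−Q²)^{−1} Q^{2m} h_y⟩^{1/2}, where m = ⌊(n−2)/4⌋. -/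
open scoped BigOperators

/-- The inner product of `ℓ²(V, π)` for a finite set `V` with weights `π`. -/
noncomputable def piInner {V : Type*} [Fintype V] (π : V → ℝ) (f g : V → ℝ) : ℝ :=
  ∑ z, π z * f z * g z

/-!
Symmetrising by `√π` writes `Q = T⁻¹ diag(μ) T` with `T` an isometry of `ℓ²(V, π)` onto the
Euclidean `ℓ²(V)`, and the norm hypothesis forces `|μᵢ| ≤ c < 1`. Both sides then become sums
over the eigenbasis, and it suffices to compare them eigenvalue by eigenvalue:
`|μ|^(n-2) ≤ (2/n) (1 - μ²)⁻¹ μ^(2m)` because `|μ|^k (1 - μ²) ≤ 1/(k+1)` for `k = n - 2 - 2m`,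
and `k + 1 ≥ n/2`. A weighted Cauchy–Schwarz inequality concludes.
-/

lemma pow_le_exp_nat_mul_sub_one {x : ℝ} (hx : 0 ≤ x) (k : ℕ) :
    x ^ k ≤ Real.exp (k * (x - 1)) := by
  rw [Real.exp_nat_mul]
  exact pow_le_pow_left₀ hx (by linarith [Real.add_one_le_exp (x - 1)]) k

/- The maximum of `u ^ k * (1 - u) ^ 2` is attained at `c = k / (k + 2)`. Applying
`x ≤ exp (x - 1)` to `u / c` and `(1 - u) / (1 - c)`, for which
`k * (u / c) + 2 * ((1 - u) / (1 - c))` does not depend on `u`, bounds the ratio to the maximum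
by `1`; applying it to `c` and to `k / (k + 2)` bounds the maximum itself. -/
lemma add_one_sq_mul_pow_mul_one_sub_sq_le_one (k : ℕ) {u : ℝ} (hu₀ : 0 ≤ u) (hu₁ : u ≤ 1) :
    (k + 1) ^ 2 * (u ^ k * (1 - u) ^ 2) ≤ 1 := by
  rcases k.eq_zero_or_pos with rfl | hk
  · simp only [Nat.cast_zero, zero_add, one_pow, pow_zero, one_mul]; nlinarith
  set K : ℝ := (k : ℝ)
  have hK : 0 < K := by simp [K, hk]
  set c := K / (K + 2)
  have hc₀ : 0 < c := by positivity
  have hc₁ : 0 < 1 - c := by rw [sub_pos, div_lt_one (by positivity)]; linarith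
  have hsplit : u ^ k * (1 - u) ^ 2 =
      c ^ k * (1 - c) ^ 2 * ((u / c) ^ k * ((1 - u) / (1 - c)) ^ 2) := by
    rw [mul_mul_mul_comm, ← mul_pow, ← mul_pow, mul_div_cancel₀ _ hc₀.ne',
      mul_div_cancel₀ _ hc₁.ne']
  have hratio : (u / c) ^ k * ((1 - u) / (1 - c)) ^ 2 ≤ 1 := by
    calc _ ≤ Real.exp (K * (u / c - 1)) * Real.exp ((2 : ℕ) * ((1 - u) / (1 - c) - 1)) :=
          mul_le_mul (pow_le_exp_nat_mul_sub_one (by positivity) k)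
            (pow_le_exp_nat_mul_sub_one (div_nonneg (by linarith) hc₁.le) 2)
            (by positivity) (by positivity)
      _ = 1 := by
        rw [← Real.exp_add, Real.exp_eq_one_iff]
        simp only [c]; field_simp; ring
  have hc : c ^ k ≤ Real.exp (-(2 * (K / (K + 2)))) := by
    refine (pow_le_exp_nat_mul_sub_one hc₀.le k).trans_eq ?_
    congr 1; simp only [c]; field_simp; ring
  have h1c : (K + 1) * (1 - c) ≤ Real.exp (K / (K + 2)) := by
    refine le_of_eq_of_le ?_ (Real.add_one_le_exp _)
    simp only [c]; field_simp; ring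
  calc (K + 1) ^ 2 * (u ^ k * (1 - u) ^ 2)
      = ((K + 1) * (1 - c)) ^ 2 * c ^ k * ((u / c) ^ k * ((1 - u) / (1 - c)) ^ 2) := by
        rw [hsplit]; ring
    _ ≤ Real.exp (K / (K + 2)) ^ 2 * Real.exp (-(2 * (K / (K + 2)))) * 1 := by
        gcongr
    _ = 1 := by rw [← Real.exp_nat_mul, ← Real.exp_add]; simp

lemma add_one_mul_pow_mul_one_sub_sq_le_one (k : ℕ) {t : ℝ} (ht₀ : 0 ≤ t) (ht₁ : t ≤ 1) :
    (k + 1) * (t ^ k * (1 - t ^ 2)) ≤ 1 := by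
  have ht₂ : t ^ 2 ≤ 1 := pow_le_one₀ ht₀ ht₁
  have hnonneg : 0 ≤ (k + 1) * (t ^ k * (1 - t ^ 2)) :=
    mul_nonneg (by positivity) (mul_nonneg (pow_nonneg ht₀ k) (sub_nonneg.2 ht₂))
  refine (pow_le_one_iff_of_nonneg hnonneg two_ne_zero).mp ?_
  calc ((k + 1) * (t ^ k * (1 - t ^ 2))) ^ 2
      = (k + 1) ^ 2 * ((t ^ 2) ^ k * (1 - t ^ 2) ^ 2) := by ring
    _ ≤ 1 := add_one_sq_mul_pow_mul_one_sub_sq_le_one k (sq_nonneg t) ht₂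

lemma abs_pow_le_two_div_mul_inv_one_sub_sq_mul_pow {μ : ℝ} (hμ : |μ| < 1) (N : ℕ) :
    |μ| ^ N ≤ 2 / (N + 2) * ((1 - μ ^ 2)⁻¹ * μ ^ (2 * (N / 4))) := by
  set m := N / 4
  set k := N - 2 * m
  have hk : (k + 1) * (|μ| ^ k * (1 - |μ| ^ 2)) ≤ 1 :=
    add_one_mul_pow_mul_one_sub_sq_le_one k (abs_nonneg μ) hμ.le
  have hN : (N : ℝ) + 2 ≤ 2 * (k + 1) := by
    have : N + 2 ≤ 2 * (k + 1) := by omega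
    exact_mod_cast this
  have hμ₂ : 0 < 1 - |μ| ^ 2 := by nlinarith [abs_nonneg μ]
  have hsplit : |μ| ^ N = μ ^ (2 * m) * |μ| ^ k := by
    rw [pow_mul, ← sq_abs, ← pow_mul, ← pow_add]; congr 1; omega
  rw [hsplit, ← sq_abs, div_mul_eq_mul_div, le_div_iff₀ (by positivity)]
  have hX : |μ| ^ k * (1 - |μ| ^ 2) * (N + 2) ≤ 2 := by
    nlinarith [mul_nonneg (pow_nonneg (abs_nonneg μ) k) hμ₂.le]
  calc μ ^ (2 * m) * |μ| ^ k * (N + 2)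
      = μ ^ (2 * m) * (|μ| ^ k * (1 - |μ| ^ 2) * (N + 2)) * (1 - |μ| ^ 2)⁻¹ := by
        field_simp
    _ ≤ μ ^ (2 * m) * 2 * (1 - |μ| ^ 2)⁻¹ := by
        have : 0 ≤ μ ^ (2 * m) := by rw [pow_mul]; positivity
        gcongr
    _ = 2 * ((1 - |μ| ^ 2)⁻¹ * μ ^ (2 * m)) := by ring

open Matrix

lemma piNorm_eq_sqrt_piInner {V : Type*} [Fintype V] (π f : V → ℝ) :
    piNorm π f = √(piInner π f f) := by
  simp only [piNorm, piInner, sq, mul_assoc]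

section
variable {V R : Type*} [Fintype V] [DecidableEq V]

noncomputable def conjDiagonal [CommRing R] (T : (Matrix V V R)ˣ) : (V → R) →+* Matrix V V R :=
  (MulSemiringAction.toRingHom _ _ (ConjAct.toConjAct T⁻¹)).comp (diagonalRingHom V R)

lemma conjDiagonal_apply [CommRing R] (T : (Matrix V V R)ˣ) (v : V → R) :
    conjDiagonal T v = (↑(T⁻¹) : Matrix V V R) * diagonal v * T := by
  simp [conjDiagonal, ConjAct.units_smul_def]

lemma inv_conjDiagonal [Field R] (T : (Matrix V V R)ˣ) {v : V → R} (hv : ∀ i, v i ≠ 0) :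
    (conjDiagonal T v)⁻¹ = conjDiagonal T v⁻¹ := by
  refine inv_eq_right_inv ?_
  rw [← map_mul, ← map_one (conjDiagonal T)]
  congr 1
  funext i
  exact mul_inv_cancel₀ (hv i)

lemma mulVec_dotProduct_mulVec_of_transpose_mul_self [CommSemiring R] {A : Matrix V V R}
    (hA : Aᵀ * A = 1) (x y : V → R) : A *ᵥ x ⬝ᵥ A *ᵥ y = x ⬝ᵥ y := by
  rw [dotProduct_mulVec, ← vecMul_transpose, vecMul_vecMul, hA, vecMul_one]

lemma isHermitian_diagonal_mul_mul_diagonal_inv {Q : Matrix V V ℝ} {π d : V → ℝ}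
    (hd : ∀ z, d z ≠ 0) (hπ : ∀ z, π z = d z ^ 2) (hsym : ∀ z z', π z * Q z z' = π z' * Q z' z) :
    (diagonal d * Q * diagonal d⁻¹).IsHermitian := by
  refine IsHermitian.ext fun i j => ?_
  have hdi := hd i
  have hdj := hd j
  simp only [mul_diagonal, diagonal_mul, star_trivial, Pi.inv_apply]
  field_simp
  rw [← hπ, ← hπ]
  exact hsym j i

lemma exists_conjDiagonal_eq_of_detailed_balance {Q : Matrix V V ℝ} {π : V → ℝ}
    (hπ : ∀ z, 0 < π z) (hsym : ∀ z z', π z * Q z z' = π z' * Q z' z) :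
    ∃ (T : (Matrix V V ℝ)ˣ) (μ : V → ℝ), Q = conjDiagonal T μ ∧
      ∀ f g, piInner π f g = (T : Matrix V V ℝ) *ᵥ f ⬝ᵥ (T : Matrix V V ℝ) *ᵥ g := by
  set d : V → ℝ := fun z => √(π z)
  have hd : ∀ z, d z ≠ 0 := fun z => (Real.sqrt_pos.2 (hπ z)).ne'
  have hdd : diagonal d * diagonal d⁻¹ = 1 := by
    rw [diagonal_mul_diagonal, ← diagonal_one]; congr 1; funext z; exact mul_inv_cancel₀ (hd z)
  have hdd' : diagonal d⁻¹ * diagonal d = 1 := by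
    rw [diagonal_mul_diagonal, ← diagonal_one]; congr 1; funext z; exact inv_mul_cancel₀ (hd z)
  let D : (Matrix V V ℝ)ˣ := ⟨diagonal d, diagonal d⁻¹, hdd, hdd'⟩
  have hS := isHermitian_diagonal_mul_mul_diagonal_inv hd (fun z => (Real.sq_sqrt (hπ z).le).symm)
    hsym
  obtain ⟨U, μ, hspec⟩ : ∃ (U : unitaryGroup V ℝ) (μ : V → ℝ),
      diagonal d * Q * diagonal d⁻¹ = U * diagonal μ * star (U : Matrix V V ℝ) :=
    ⟨hS.eigenvectorUnitary, hS.eigenvalues, by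
      simpa [RCLike.ofReal_real_eq_id] using hS.spectral_theorem⟩
  refine ⟨(Unitary.toUnits U)⁻¹ * D, μ, ?_, fun f g => ?_⟩
  · rw [conjDiagonal_apply, _root_.mul_inv_rev, inv_inv]
    simp only [Units.val_mul, Unitary.val_inv_toUnits_apply, Unitary.val_toUnits_apply, D,
      Units.inv_mk, ← Unitary.star_eq_inv, Unitary.coe_star]
    calc Q = diagonal d⁻¹ * diagonal d * Q * (diagonal d⁻¹ * diagonal d) := by
          rw [hdd', Matrix.one_mul, Matrix.mul_one]
      _ = diagonal d⁻¹ * (diagonal d * Q * diagonal d⁻¹) * diagonal d := by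
          simp only [Matrix.mul_assoc]
      _ = _ := by rw [hspec]; simp only [Matrix.mul_assoc]
  · have hU : (star (U : Matrix V V ℝ))ᵀ * star (U : Matrix V V ℝ) = 1 := by
      rw [star_eq_conjTranspose, conjTranspose_eq_transpose_of_trivial, transpose_transpose,
        ← conjTranspose_eq_transpose_of_trivial, ← star_eq_conjTranspose,
        Unitary.mul_star_self_of_mem U.2]
    simp only [Units.val_mul, Unitary.val_inv_toUnits_apply, D, ← Unitary.star_eq_inv,
      Unitary.coe_star, ← mulVec_mulVec, mulVec_dotProduct_mulVec_of_transpose_mul_self hU]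
    simp only [piInner, dotProduct, mulVec_diagonal, d]
    refine Finset.sum_congr rfl fun z _ => ?_
    rw [mul_mul_mul_comm, Real.mul_self_sqrt (hπ z).le, mul_assoc]

lemma mulVec_conjDiagonal_mulVec (T : (Matrix V V ℝ)ˣ) (ν g : V → ℝ) :
    (T : Matrix V V ℝ) *ᵥ (conjDiagonal T ν *ᵥ g) = diagonal ν *ᵥ ((T : Matrix V V ℝ) *ᵥ g) := by
  rw [conjDiagonal_apply, mulVec_mulVec, ← Matrix.mul_assoc, ← Matrix.mul_assoc, Units.mul_inv,
    Matrix.one_mul, ← mulVec_mulVec]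

variable {π : V → ℝ} {T : (Matrix V V ℝ)ˣ}

lemma piInner_conjDiagonal_mulVec
    (hT : ∀ f g, piInner π f g = (T : Matrix V V ℝ) *ᵥ f ⬝ᵥ (T : Matrix V V ℝ) *ᵥ g)
    (ν f g : V → ℝ) :
    piInner π f (conjDiagonal T ν *ᵥ g) =
      ∑ i, ν i * ((T : Matrix V V ℝ) *ᵥ f) i * ((T : Matrix V V ℝ) *ᵥ g) i := by
  rw [hT, mulVec_conjDiagonal_mulVec, dotProduct]
  refine Finset.sum_congr rfl fun i _ => ?_
  rw [mulVec_diagonal]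
  ring

lemma abs_le_of_piNorm_mulVec_le {Q : Matrix V V ℝ} {μ : V → ℝ} {c : ℝ}
    (hQ : Q = conjDiagonal T μ)
    (hT : ∀ f g, piInner π f g = (T : Matrix V V ℝ) *ᵥ f ⬝ᵥ (T : Matrix V V ℝ) *ᵥ g)
    (hc : ∀ f, piNorm π (Q *ᵥ f) ≤ c * piNorm π f) (i : V) : |μ i| ≤ c := by
  have he : (T : Matrix V V ℝ) *ᵥ ((↑(T⁻¹) : Matrix V V ℝ) *ᵥ Pi.single i 1) = Pi.single i 1 := by
    rw [mulVec_mulVec, Units.mul_inv, one_mulVec]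
  have h := hc ((↑(T⁻¹) : Matrix V V ℝ) *ᵥ Pi.single i 1)
  rw [piNorm_eq_sqrt_piInner, piNorm_eq_sqrt_piInner, hT, hT, hQ, mulVec_conjDiagonal_mulVec, he,
    diagonal_mulVec_single] at h
  simpa [Real.sqrt_mul_self_eq_abs] using h

end

lemma sum_mul_mul_le_mul_sqrt_mul_sqrt {ι : Type*} [Fintype ι] {a w x y : ι → ℝ} {c : ℝ}
    (hc : 0 < c) (h : ∀ i, |a i| ≤ c * w i) :
    ∑ i, a i * x i * y i ≤ c * √(∑ i, w i * x i * x i) * √(∑ i, w i * y i * y i) := by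
  have hw : ∀ i, 0 ≤ w i := fun i => nonneg_of_mul_nonneg_right ((abs_nonneg _).trans (h i)) hc
  have hw' : ∀ (v : ι → ℝ) i, 0 ≤ w i * v i * v i := fun v i => by
    rw [mul_assoc]; exact mul_nonneg (hw i) (mul_self_nonneg _)
  calc ∑ i, a i * x i * y i
      ≤ ∑ i, c * (√(w i * x i * x i) * √(w i * y i * y i)) := by
        refine Finset.sum_le_sum fun i _ => ?_
        rw [← Real.sqrt_mul (hw' x i),
          show w i * x i * x i * (w i * y i * y i) = (w i * (x i * y i)) ^ 2 by ring,
          Real.sqrt_sq_eq_abs, abs_mul, abs_of_nonneg (hw i), ← mul_assoc, mul_assoc]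
        exact (le_abs_self _).trans (by rw [abs_mul]; gcongr; exact h i)
    _ ≤ c * (√(∑ i, w i * x i * x i) * √(∑ i, w i * y i * y i)) := by
        rw [← Finset.mul_sum]
        gcongr
        exact Real.sum_sqrt_mul_sqrt_le _ (hw' x) (hw' y)
    _ = _ := (mul_assoc _ _ _).symm

theorem inner_pow_le_of_substochastic_general {V : Type*} [Fintype V] [DecidableEq V]
    (Q : Matrix V V ℝ) (π : V → ℝ)
    (hπpos : ∀ z, 0 < π z)
    (hsym : ∀ z z', π z * Q z z' = π z' * Q z' z)
    (hnorm : ∃ c : ℝ, c < 1 ∧ ∀ f : V → ℝ, piNorm π (Q.mulVec f) ≤ c * piNorm π f)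
    (hx hy : V → ℝ)
    (n : ℕ) (hn : 2 ≤ n) :
    piInner π hx ((Q ^ (n - 2)).mulVec hy) ≤
      (2 / n) *
        Real.sqrt (piInner π hx (((1 - Q ^ 2)⁻¹ * Q ^ (2 * ((n - 2) / 4))).mulVec hx)) *
        Real.sqrt (piInner π hy (((1 - Q ^ 2)⁻¹ * Q ^ (2 * ((n - 2) / 4))).mulVec hy)) := by
  obtain ⟨c, hc₁, hc⟩ := hnorm
  obtain ⟨T, μ, hQ, hT⟩ := exists_conjDiagonal_eq_of_detailed_balance hπpos hsym
  have hμ : ∀ i, |μ i| < 1 := fun i => (abs_le_of_piNorm_mulVec_le hQ hT hc i).trans_lt hc₁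
  have hμ₂ : ∀ i, (1 - μ ^ 2 : V → ℝ) i ≠ 0 := fun i => by
    have := sq_lt_one_iff_abs_lt_one (μ i) |>.2 (hμ i)
    simp only [Pi.sub_apply, Pi.one_apply, Pi.pow_apply]; linarith
  set N := n - 2
  have hpow : Q ^ N = conjDiagonal T (μ ^ N) := by rw [hQ, map_pow]
  have hres : (1 - Q ^ 2)⁻¹ * Q ^ (2 * (N / 4)) =
      conjDiagonal T ((1 - μ ^ 2)⁻¹ * μ ^ (2 * (N / 4))) := by
    rw [hQ, ← map_pow, ← map_pow, ← map_one (conjDiagonal T), ← map_sub, inv_conjDiagonal T hμ₂,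
      ← map_mul]
  have hn' : (n : ℝ) = N + 2 := by simp only [N, Nat.cast_sub hn]; push_cast; ring
  rw [hpow, hres, piInner_conjDiagonal_mulVec hT, piInner_conjDiagonal_mulVec hT,
    piInner_conjDiagonal_mulVec hT, hn']
  refine sum_mul_mul_le_mul_sqrt_mul_sqrt (by positivity) fun i => ?_
  simpa only [Pi.pow_apply, Pi.mul_apply, Pi.inv_apply, Pi.sub_apply, Pi.one_apply, abs_pow]
    using abs_pow_le_two_div_mul_inv_one_sub_sq_mul_pow (hμ i) N

/-- Cauchy–Schwarz-type bound `⟨h_x, Q^{n−2}h_y⟩ ≤ (2/n)·⟨h_x,(I−Q²)⁻¹Q^{2m}h_x⟩^{1/2}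
⟨h_y,(I−Q²)⁻¹Q^{2m}h_y⟩^{1/2}` with `m = ⌊(n−2)/4⌋`, for a self-adjoint substochastic
operator `Q` on `ℓ²(V,π)` with `‖Q‖ < 1` and nonnegative `h_x, h_y`. -/
theorem inner_pow_le_of_substochastic {V : Type*} [Fintype V] [DecidableEq V]
    (Q : Matrix V V ℝ) (π : V → ℝ)
    (hπpos : ∀ z, 0 < π z)
    (hQnonneg : ∀ z z', 0 ≤ Q z z')
    (hsym : ∀ z z', π z * Q z z' = π z' * Q z' z)
    (hsub : ∀ z, ∑ z', Q z z' ≤ 1)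
    (hnorm : ∃ c : ℝ, c < 1 ∧ ∀ f : V → ℝ, piNorm π (Q.mulVec f) ≤ c * piNorm π f)
    (hx hy : V → ℝ) (hhx : ∀ z, 0 ≤ hx z) (hhy : ∀ z, 0 ≤ hy z)
    (n : ℕ) (hn : 2 ≤ n) :
    piInner π hx ((Q ^ (n - 2)).mulVec hy) ≤
      (2 / n) *
        Real.sqrt (piInner π hx (((1 - Q ^ 2)⁻¹ * Q ^ (2 * ((n - 2) / 4))).mulVec hx)) *
        Real.sqrt (piInner π hy (((1 - Q ^ 2)⁻¹ * Q ^ (2 * ((n - 2) / 4))).mulVec hy)) :=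
  inner_pow_le_of_substochastic_general Q π hπpos hsym hnorm hx hy n hn
end

section
/- Suppose a reversible Markov chain (X̂_ℓ) on a state space C with stationary measure π satisfies the uniform bound sup_{x,y} P̂^n(x,y) ≤ C·n^{−d/2} (d ≥ 4), and suppose for each starting point there are nonnegative random variables T₁,…,T_ℓ (times between coarse-grained steps) with E[Σ_{i≤k} T_i] ≤ C'·k for all k. Then for all ℓ ≥ 1 and n ≥ 1, P(X̂_ℓ = 0, Σ_{i≤⌈ℓ/2⌉} T_i ≥ n) ≤ C''·ℓ^{−d/2}·n^{−1}·E(Σ_{i≤⌈ℓ/2⌉} T_i ; Σ_{i≤⌈ℓ/2⌉} T_i ≥ n). -/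
/-
The chain is split at the midpoint `m = ⌈ℓ/2⌉`. By the Markov property the return probability
is `∑ₓ P(X̂_m = x, S_m ≥ n) · P̂^{ℓ-m}(x, 0)`; since `ℓ - m ≥ ℓ/4` once `ℓ ≥ 2`, the uniform
kernel bound makes each `P̂^{ℓ-m}(x, 0)` at most `C 4^{d/2} ℓ^{-d/2}`, and summing over `x`
leaves `P(S_m ≥ n)` (for `ℓ = 1` the event is contained in `{S_m ≥ n}` directly), which
Chebyshev's inequality bounds by `n⁻¹ E(S_m; S_m ≥ n)`.
-/

open MeasureTheory

theorem Real.rpow_neg_le_mul_rpow_neg_of_le_mul {a b c s : ℝ} (ha : 0 < a) (hc : 0 < c)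
    (hab : a ≤ c * b) (hs : 0 ≤ s) : b ^ (-s) ≤ c ^ s * a ^ (-s) :=
  calc b ^ (-s) ≤ (a / c) ^ (-s) :=
        Real.rpow_le_rpow_of_nonpos (div_pos ha hc) ((div_le_iff₀' hc).2 hab)
          (neg_nonpos.2 hs)
    _ = c ^ s * a ^ (-s) := by
        rw [Real.div_rpow ha.le hc.le, Real.rpow_neg hc.le, div_inv_eq_mul, mul_comm]

namespace MeasureTheory

variable {Ω S : Type*} [MeasurableSpace Ω] [MeasurableSpace S] {μ : Measure Ω} [IsFiniteMeasure μ]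

theorem mul_measureReal_ge_le_setIntegral {f : Ω → ℝ} (hf : Integrable f μ) (c : ℝ) :
    c * μ.real {ω | c ≤ f ω} ≤ ∫ ω in {ω | c ≤ f ω}, f ω ∂μ := by
  have h := setIntegral_mono_on₀ (integrableOn_const (measure_ne_top μ _)) hf.integrableOn
    (aestronglyMeasurable_const.nullMeasurableSet_le hf.1) fun ω (hω : c ≤ f ω) => hω
  rwa [setIntegral_const, smul_eq_mul, mul_comm] at h

variable [Countable S] [MeasurableSingletonClass S] {Y : Ω → S} {A : Set Ω}

theorem hasSum_measureReal_preimage_singleton_inter (hY : Measurable Y)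
    (hA : NullMeasurableSet A μ) :
    HasSum (fun x => μ.real {ω | Y ω = x ∧ ω ∈ A}) (μ.real A) := by
  have hdisj : Pairwise (Function.onFun (AEDisjoint μ) fun x => {ω | Y ω = x ∧ ω ∈ A}) :=
    fun x y hxy => (Set.disjoint_left.2 fun ω hx hy => hxy (hx.1.symm.trans hy.1)).aedisjoint
  have hunion : μ A = ∑' x, μ {ω | Y ω = x ∧ ω ∈ A} := by
    rw [← measure_iUnion₀ hdisj fun x =>
      (hY (measurableSet_singleton x)).nullMeasurableSet.inter hA]
    congr 1
    ext ω
    simp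
  rw [measureReal_def, hunion, ENNReal.tsum_toReal_eq fun _ => measure_ne_top μ _]
  exact (ENNReal.summable_toReal (hunion ▸ measure_ne_top μ A)).hasSum

theorem tsum_measureReal_preimage_singleton_inter_mul_le (hY : Measurable Y)
    (hA : NullMeasurableSet A μ) {f : S → ℝ} {b : ℝ} (hf : ∀ x, f x ≤ b) (hb : 0 ≤ b) :
    ∑' x, μ.real {ω | Y ω = x ∧ ω ∈ A} * f x ≤ μ.real A * b := by
  have hsum := hasSum_measureReal_preimage_singleton_inter hY hA
  by_cases hfs : Summable fun x => μ.real {ω | Y ω = x ∧ ω ∈ A} * f x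
  · calc ∑' x, μ.real {ω | Y ω = x ∧ ω ∈ A} * f x
          ≤ ∑' x, μ.real {ω | Y ω = x ∧ ω ∈ A} * b :=
            hfs.tsum_le_tsum (fun x => mul_le_mul_of_nonneg_left (hf x) measureReal_nonneg)
              (hsum.summable.mul_right b)
      _ = μ.real A * b := by rw [tsum_mul_right, hsum.tsum_eq]
  · rw [tsum_eq_zero_of_not_summable hfs]
    positivity

end MeasureTheory

theorem return_prob_le_truncated_expectation_general
    {Ω : Type*} [MeasurableSpace Ω] (μ : Measure Ω) [IsProbabilityMeasure μ]
    {S : Type*} [MeasurableSpace S] [MeasurableSingletonClass S] [Countable S]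
    (z₀ : S) (Xhat : ℕ → Ω → S) (T : ℕ → Ω → ℝ)
    (hXmeas : ∀ ℓ, Measurable (Xhat ℓ))
    (hTint : ∀ i, Integrable (T i) μ)
    (d : ℕ)
    (PhatPow : ℕ → S → S → ℝ)
    (C : ℝ) (hC : 0 < C)
    (hsup : ∀ m : ℕ, 1 ≤ m → ∀ x y : S, PhatPow m x y ≤ C * (m : ℝ) ^ (-(d : ℝ) / 2))
    (hMarkov : ∀ ℓ n : ℕ, 1 ≤ ℓ → 1 ≤ n →
      (μ {ω | Xhat ℓ ω = z₀ ∧ (n : ℝ) ≤ ∑ i ∈ Finset.Icc 1 ((ℓ + 1) / 2), T i ω}).toReal =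
        ∑' x : S,
          (μ {ω | Xhat ((ℓ + 1) / 2) ω = x ∧
              (n : ℝ) ≤ ∑ i ∈ Finset.Icc 1 ((ℓ + 1) / 2), T i ω}).toReal *
            PhatPow (ℓ - (ℓ + 1) / 2) x z₀) :
    ∃ C'' : ℝ, 0 < C'' ∧ ∀ ℓ n : ℕ, 1 ≤ ℓ → 1 ≤ n →
      (μ {ω | Xhat ℓ ω = z₀ ∧ (n : ℝ) ≤ ∑ i ∈ Finset.Icc 1 ((ℓ + 1) / 2), T i ω}).toReal ≤
        C'' * (ℓ : ℝ) ^ (-(d : ℝ) / 2) * (n : ℝ)⁻¹ *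
          ∫ ω in {ω | (n : ℝ) ≤ ∑ i ∈ Finset.Icc 1 ((ℓ + 1) / 2), T i ω},
            (∑ i ∈ Finset.Icc 1 ((ℓ + 1) / 2), T i ω) ∂μ := by
  refine ⟨max 1 C * 4 ^ ((d : ℝ) / 2), by positivity, fun ℓ n hℓ hn => ?_⟩
  set m := (ℓ + 1) / 2
  have hSint : Integrable (fun ω => ∑ i ∈ Finset.Icc 1 m, T i ω) μ :=
    integrable_finsetSum _ fun i _ => hTint i
  set A : Set Ω := {ω | (n : ℝ) ≤ ∑ i ∈ Finset.Icc 1 m, T i ω}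
  have hA : NullMeasurableSet A μ := aestronglyMeasurable_const.nullMeasurableSet_le hSint.1
  have hcheb : μ.real A ≤ (n : ℝ)⁻¹ * ∫ ω in A, (∑ i ∈ Finset.Icc 1 m, T i ω) ∂μ :=
    (le_inv_mul_iff₀ (by positivity)).2 (mul_measureReal_ge_le_setIntegral hSint n)
  suffices h : μ.real {ω | Xhat ℓ ω = z₀ ∧ ω ∈ A} ≤
      max 1 C * 4 ^ ((d : ℝ) / 2) * (ℓ : ℝ) ^ (-(d : ℝ) / 2) * μ.real A by
    calc _ ≤ _ := h
      _ ≤ _ := mul_le_mul_of_nonneg_left hcheb (by positivity)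
      _ = _ := by ring
  obtain rfl | hℓ2 := hℓ.eq_or_lt
  · calc μ.real {ω | Xhat 1 ω = z₀ ∧ ω ∈ A} ≤ μ.real A := measureReal_mono fun ω h => h.2
      _ ≤ _ := by
        refine le_mul_of_one_le_left measureReal_nonneg ?_
        rw [Nat.cast_one, Real.one_rpow, mul_one]
        exact one_le_mul_of_one_le_of_one_le (le_max_left _ _)
          (Real.one_le_rpow (by norm_num) (by positivity))
  · have hr : 1 ≤ ℓ - m := by omega
    have hkernel : ((ℓ - m : ℕ) : ℝ) ^ (-(d : ℝ) / 2) ≤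
        4 ^ ((d : ℝ) / 2) * (ℓ : ℝ) ^ (-(d : ℝ) / 2) := by
      rw [neg_div]
      refine Real.rpow_neg_le_mul_rpow_neg_of_le_mul (by positivity) (by norm_num) ?_
        (by positivity)
      exact_mod_cast (by omega : ℓ ≤ 4 * (ℓ - m))
    calc _ = _ := hMarkov ℓ n hℓ hn
      _ ≤ μ.real A * (C * ((ℓ - m : ℕ) : ℝ) ^ (-(d : ℝ) / 2)) :=
        tsum_measureReal_preimage_singleton_inter_mul_le (hXmeas m) hA
          (fun x => hsup _ hr x z₀) (by positivity)
      _ ≤ μ.real A * (max 1 C * (4 ^ ((d : ℝ) / 2) * (ℓ : ℝ) ^ (-(d : ℝ) / 2))) := by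
        gcongr
        exact le_max_right _ _
      _ = _ := by ring

/-- Lemma 3.1: if the coarse-grained chain has uniformly diffusive `n`-step kernel bounds
and the inter-visit times have linearly bounded expectations, then the probability of
returning to the origin at step `ℓ` while the first `⌈ℓ/2⌉` times sum to at least `n` is
bounded by `C''·ℓ^{−d/2}·n^{−1}` times the corresponding truncated expectation. -/
theorem return_prob_le_truncated_expectation
    {Ω : Type*} [MeasurableSpace Ω] (μ : Measure Ω) [IsProbabilityMeasure μ]
    {S : Type*} [MeasurableSpace S] [MeasurableSingletonClass S] [Countable S]
    (z₀ : S) (Xhat : ℕ → Ω → S) (T : ℕ → Ω → ℝ)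
    (hXmeas : ∀ ℓ, Measurable (Xhat ℓ))
    (hTmeas : ∀ i, Measurable (T i))
    (hTnonneg : ∀ i ω, 0 ≤ T i ω)
    (hTint : ∀ i, Integrable (T i) μ)
    (d : ℕ) (hd : 4 ≤ d)
    (PhatPow : ℕ → S → S → ℝ)
    (hPnonneg : ∀ m x y, 0 ≤ PhatPow m x y)
    (C : ℝ) (hC : 0 < C)
    (hsup : ∀ m : ℕ, 1 ≤ m → ∀ x y : S, PhatPow m x y ≤ C * (m : ℝ) ^ (-(d : ℝ) / 2))
    (C' : ℝ) (hC' : 0 < C')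
    (hexp : ∀ k : ℕ, ∫ ω, (∑ i ∈ Finset.Icc 1 k, T i ω) ∂μ ≤ C' * k)
    (hMarkov : ∀ ℓ n : ℕ, 1 ≤ ℓ → 1 ≤ n →
      (μ {ω | Xhat ℓ ω = z₀ ∧ (n : ℝ) ≤ ∑ i ∈ Finset.Icc 1 ((ℓ + 1) / 2), T i ω}).toReal =
        ∑' x : S,
          (μ {ω | Xhat ((ℓ + 1) / 2) ω = x ∧
              (n : ℝ) ≤ ∑ i ∈ Finset.Icc 1 ((ℓ + 1) / 2), T i ω}).toReal *
            PhatPow (ℓ - (ℓ + 1) / 2) x z₀) :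
    ∃ C'' : ℝ, 0 < C'' ∧ ∀ ℓ n : ℕ, 1 ≤ ℓ → 1 ≤ n →
      (μ {ω | Xhat ℓ ω = z₀ ∧ (n : ℝ) ≤ ∑ i ∈ Finset.Icc 1 ((ℓ + 1) / 2), T i ω}).toReal ≤
        C'' * (ℓ : ℝ) ^ (-(d : ℝ) / 2) * (n : ℝ)⁻¹ *
          ∫ ω in {ω | (n : ℝ) ≤ ∑ i ∈ Finset.Icc 1 ((ℓ + 1) / 2), T i ω},
            (∑ i ∈ Finset.Icc 1 ((ℓ + 1) / 2), T i ω) ∂μ :=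
  return_prob_le_truncated_expectation_general μ z₀ Xhat T hXmeas hTint d PhatPow C hC hsup hMarkov
end

section
/- Let μ be a probability measure preserved by a transformation τ, let f ∈ L^p(μ) for all p ≥ 1 with f ≥ 0, and set W* := sup_{ℓ≥1} (1/ℓ) Σ_{j=0}^{ℓ−1} f∘τ^j. Then W* ∈ L^p(μ) for all p ≥ 1. -/
/-!
On the set where some Birkhoff sum of `g` is positive, the running maximum `M` of the Birkhoff
sums satisfies `M ≤ g + M ∘ τ`; since `∫ M = ∫ M ∘ τ`, `g` has nonnegative integral there (Hopf).
Applied to `g - t` this is the weak-type bound `t μ {W > t} ≤ ∫_{W > t} g` for the truncated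
maximal average `W`. Expanding `∫ W^q` and `∫ g W^(q-1)` by the layer-cake formula turns it into
`∫ W^q ≤ q/(q-1) ∫ g W^(q-1)`, and Hölder's inequality absorbs `W^(q-1)` into the left side,
which is finite because the truncated `W` is a maximum of finitely many `L^q` functions.
Monotone convergence in the truncation finishes the proof.
-/

open MeasureTheory
open scoped BigOperators
open Finset
open scoped ENNReal

/-- Only `≤`: the real `⨆` of an unbounded family is `0`. -/
theorem ENNReal.ofReal_iSup_le {ι : Sort*} [Nonempty ι] (f : ι → ℝ) :
    ENNReal.ofReal (⨆ i, f i) ≤ ⨆ i, ENNReal.ofReal (f i) := by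
  by_cases hf : BddAbove (Set.range f)
  · exact (Monotone.map_ciSup_of_continuousAt ENNReal.continuous_ofReal.continuousAt
      ENNReal.ofReal_mono hf).le
  · rw [Real.iSup_of_not_bddAbove hf, ENNReal.ofReal_zero]
    exact zero_le

theorem ENNReal.le_rpow_mul_of_le_mul_rpow {a b c : ℝ≥0∞} {q : ℝ} (hq : 0 < q) (ha : a ≠ ∞)
    (h : a ≤ c * b ^ (1 / q) * a ^ (1 - 1 / q)) : a ≤ c ^ q * b := by
  rcases eq_or_ne a 0 with rfl | ha0
  · exact zero_le
  have hroot : a ^ (1 / q) ≤ c * b ^ (1 / q) := by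
    rw [← ENNReal.mul_le_mul_iff_left (ENNReal.rpow_pos (pos_iff_ne_zero.2 ha0) ha).ne'
      (ENNReal.rpow_ne_top_of_ne_zero ha0 ha), ← ENNReal.rpow_add _ _ ha0 ha,
      add_sub_cancel, ENNReal.rpow_one]
    exact h
  calc a = (a ^ (1 / q)) ^ q := by
        rw [← ENNReal.rpow_mul, one_div_mul_cancel hq.ne', ENNReal.rpow_one]
    _ ≤ (c * b ^ (1 / q)) ^ q := by gcongr
    _ = c ^ q * b := by
      rw [ENNReal.mul_rpow_of_nonneg _ _ hq.le, ← ENNReal.rpow_mul, one_div_mul_cancel hq.ne',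
        ENNReal.rpow_one]

section Lp

variable {α ι : Type*} [MeasurableSpace α] {μ : Measure α}

theorem MeasureTheory.MemLp.finset_sup' {p : ℝ≥0∞} {s : Finset ι} (hs : s.Nonempty)
    {f : ι → α → ℝ} (hf : ∀ i ∈ s, MemLp (f i) p μ) : MemLp (s.sup' hs f) p μ :=
  Finset.sup'_induction (p := (MemLp · p μ)) hs f (fun _ hf _ hg => hf.sup hg) hf

theorem MeasureTheory.MemLp.lintegral_ofReal_rpow_lt_top {F : α → ℝ} (hF0 : 0 ≤ F) {q : ℝ}
    (hq : 0 < q) (hF : MemLp F (ENNReal.ofReal q) μ) :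
    ∫⁻ x, ENNReal.ofReal (F x) ^ q ∂μ < ∞ := by
  have := lintegral_rpow_enorm_lt_top_of_eLpNorm_lt_top (by simpa using hq)
    ENNReal.ofReal_ne_top hF.2
  simpa [ENNReal.toReal_ofReal hq.le, Real.enorm_of_nonneg (hF0 _)] using this

end Lp

section Birkhoff

variable {α : Type*} {τ : α → α} {g : α → ℝ}

def birkhoffMax (τ : α → α) (g : α → ℝ) (n : ℕ) : α → ℝ :=
  (range (n + 1)).sup' nonempty_range_add_one (birkhoffSum τ g)

theorem birkhoffMax_apply (n : ℕ) (x : α) :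
    birkhoffMax τ g n x =
      (range (n + 1)).sup' nonempty_range_add_one fun k => birkhoffSum τ g k x :=
  Finset.sup'_apply _ _ _

theorem birkhoffSum_le_birkhoffMax {k n : ℕ} (hk : k ≤ n) (x : α) :
    birkhoffSum τ g k x ≤ birkhoffMax τ g n x := by
  rw [birkhoffMax_apply]
  exact le_sup' (fun k => birkhoffSum τ g k x) (mem_range_succ_iff.2 hk)

theorem birkhoffMax_nonneg (n : ℕ) (x : α) : 0 ≤ birkhoffMax τ g n x := by
  simpa using birkhoffSum_le_birkhoffMax (τ := τ) (g := g) n.zero_le x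

theorem birkhoffMax_pos_iff {n : ℕ} {x : α} :
    0 < birkhoffMax τ g n x ↔ ∃ k < n + 1, 0 < birkhoffSum τ g k x := by
  simp [birkhoffMax_apply, lt_sup'_iff]

/-- The maximum is attained at some `S_(k+1) g x = g x + S_k g (τ x)`, as `S_0 g x = 0`. -/
theorem birkhoffMax_le_add_birkhoffMax_apply {n : ℕ} {x : α} (hx : 0 < birkhoffMax τ g n x) :
    birkhoffMax τ g n x ≤ g x + birkhoffMax τ g n (τ x) := by
  obtain ⟨k, hk, hmax⟩ :=
    exists_mem_eq_sup' nonempty_range_add_one fun k => birkhoffSum τ g k x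
  rw [← birkhoffMax_apply] at hmax
  cases k with
  | zero => rw [hmax] at hx; simp at hx
  | succ k =>
    rw [hmax, birkhoffSum_succ']
    gcongr
    exact birkhoffSum_le_birkhoffMax (by simp at hk; omega) _

variable [MeasurableSpace α] {μ : Measure α}

theorem measurable_birkhoffSum (hτ : Measurable τ) (hg : Measurable g) (n : ℕ) :
    Measurable (birkhoffSum τ g n) :=
  Finset.measurable_sum _ fun k _ => hg.comp (hτ.iterate k)

theorem memLp_birkhoffSum {p : ℝ≥0∞} (hτ : MeasurePreserving τ μ μ) (hg : MemLp g p μ) (n : ℕ) :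
    MemLp (birkhoffSum τ g n) p μ :=
  memLp_finsetSum _ fun k _ => hg.comp_measurePreserving (hτ.iterate k)

theorem memLp_birkhoffMax {p : ℝ≥0∞} (hτ : MeasurePreserving τ μ μ) (hg : MemLp g p μ) (n : ℕ) :
    MemLp (birkhoffMax τ g n) p μ :=
  MemLp.finset_sup' _ fun k _ => memLp_birkhoffSum hτ hg k

theorem setIntegral_birkhoffMax_pos_nonneg (hτ : MeasurePreserving τ μ μ) (hgm : Measurable g)
    (hg : Integrable g μ) (n : ℕ) : 0 ≤ ∫ x in {x | 0 < birkhoffMax τ g n x}, g x ∂μ := by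
  set M := birkhoffMax τ g n
  have hMm : Measurable M :=
    Finset.measurable_range_sup' fun k _ => measurable_birkhoffSum hτ.measurable hgm k
  have hM : Integrable M μ :=
    memLp_one_iff_integrable.1 (memLp_birkhoffMax hτ (memLp_one_iff_integrable.2 hg) n)
  have hMτ : Integrable (fun x => M (τ x)) μ := hτ.integrable_comp_of_integrable hM
  have hE : MeasurableSet {x | 0 < M x} := measurableSet_lt measurable_const hMm
  have hinvariant : ∫ x, M (τ x) ∂μ = ∫ x, M x ∂μ := by
    rw [← integral_map hτ.aemeasurable (hτ.map_eq ▸ hMm.aestronglyMeasurable), hτ.map_eq]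
  have hcompl : ∫ x in {x | 0 < M x}ᶜ, (M x - M (τ x)) ∂μ ≤ 0 := by
    refine setIntegral_nonpos hE.compl fun x hx => ?_
    have hMx : M x = 0 := le_antisymm (not_lt.1 hx) (birkhoffMax_nonneg n x)
    linarith [birkhoffMax_nonneg (τ := τ) (g := g) n (τ x)]
  calc 0 = ∫ x, (M x - M (τ x)) ∂μ := by rw [integral_sub hM hMτ, hinvariant, sub_self]
    _ = ∫ x in {x | 0 < M x}, (M x - M (τ x)) ∂μ + ∫ x in {x | 0 < M x}ᶜ, (M x - M (τ x)) ∂μ :=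
      (integral_add_compl hE (hM.sub hMτ)).symm
    _ ≤ ∫ x in {x | 0 < M x}, (M x - M (τ x)) ∂μ := add_le_of_nonpos_right hcompl
    _ ≤ ∫ x in {x | 0 < M x}, g x ∂μ :=
      setIntegral_mono_on (hM.sub hMτ).integrableOn hg.integrableOn hE fun x hx => by
        linarith [birkhoffMax_le_add_birkhoffMax_apply hx]

end Birkhoff

section BirkhoffAverage

variable {α : Type*} {τ : α → α} {g : α → ℝ}

noncomputable def birkhoffAverageMax (τ : α → α) (g : α → ℝ) (n : ℕ) : α → ℝ :=
  (range (n + 1)).sup' nonempty_range_add_one fun k => birkhoffAverage ℝ τ g (k + 1)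

theorem birkhoffAverageMax_apply (n : ℕ) (x : α) :
    birkhoffAverageMax τ g n x =
      (range (n + 1)).sup' nonempty_range_add_one fun k => birkhoffAverage ℝ τ g (k + 1) x :=
  Finset.sup'_apply _ _ _

theorem birkhoffAverage_le_birkhoffAverageMax {k n : ℕ} (hk : k ≤ n) (x : α) :
    birkhoffAverage ℝ τ g (k + 1) x ≤ birkhoffAverageMax τ g n x := by
  rw [birkhoffAverageMax_apply]
  exact le_sup' (fun k => birkhoffAverage ℝ τ g (k + 1) x) (mem_range_succ_iff.2 hk)

theorem birkhoffAverage_nonneg (hg : 0 ≤ g) (n : ℕ) (x : α) : 0 ≤ birkhoffAverage ℝ τ g n x :=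
  smul_nonneg (by positivity) (sum_nonneg fun _ _ => hg _)

theorem birkhoffAverageMax_nonneg (hg : 0 ≤ g) (n : ℕ) (x : α) :
    0 ≤ birkhoffAverageMax τ g n x :=
  (birkhoffAverage_nonneg hg 1 x).trans (birkhoffAverage_le_birkhoffAverageMax n.zero_le x)

theorem monotone_birkhoffAverageMax (x : α) : Monotone fun n => birkhoffAverageMax τ g n x :=
  fun _ _ hmn => by
    dsimp only
    rw [birkhoffAverageMax_apply]
    exact sup'_le _ _ fun k hk =>
      birkhoffAverage_le_birkhoffAverageMax ((mem_range_succ_iff.1 hk).trans hmn) x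

theorem lt_birkhoffAverage_iff {t : ℝ} {n : ℕ} (hn : 0 < n) {x : α} :
    t < birkhoffAverage ℝ τ g n x ↔ 0 < birkhoffSum τ (fun y => g y - t) n x := by
  simp [birkhoffAverage, birkhoffSum, sum_sub_distrib,
    lt_inv_mul_iff₀ ((Nat.cast_pos (α := ℝ)).2 hn)]

theorem setOf_lt_birkhoffAverageMax (t : ℝ) (n : ℕ) :
    {x | t < birkhoffAverageMax τ g n x} =
      {x | 0 < birkhoffMax τ (fun y => g y - t) (n + 1) x} := by
  ext x
  simp only [Set.mem_ofPred_eq, birkhoffAverageMax_apply, lt_sup'_iff, mem_range,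
    birkhoffMax_pos_iff]
  constructor
  · rintro ⟨k, hk, hx⟩
    exact ⟨k + 1, by omega, (lt_birkhoffAverage_iff k.succ_pos).1 hx⟩
  · rintro ⟨_ | k, hk, hx⟩
    · simp at hx
    · exact ⟨k, by omega, (lt_birkhoffAverage_iff k.succ_pos).2 hx⟩

theorem ofReal_iSup_birkhoffAverage_rpow_le {q : ℝ} (hq : 0 < q) (x : α) :
    ENNReal.ofReal (⨆ n : ℕ, birkhoffAverage ℝ τ g (n + 1) x) ^ q ≤
      ⨆ n : ℕ, ENNReal.ofReal (birkhoffAverageMax τ g n x) ^ q := by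
  calc ENNReal.ofReal (⨆ n : ℕ, birkhoffAverage ℝ τ g (n + 1) x) ^ q
      ≤ (⨆ n : ℕ, ENNReal.ofReal (birkhoffAverageMax τ g n x)) ^ q := by
        gcongr
        exact (ENNReal.ofReal_iSup_le _).trans <| iSup_mono fun n =>
          ENNReal.ofReal_le_ofReal (birkhoffAverage_le_birkhoffAverageMax le_rfl x)
    _ = ⨆ n : ℕ, ENNReal.ofReal (birkhoffAverageMax τ g n x) ^ q :=
        (ENNReal.orderIsoRpow q hq).map_iSup _

variable [MeasurableSpace α] {μ : Measure α}

theorem measurable_birkhoffAverage (hτ : Measurable τ) (hg : Measurable g) (n : ℕ) :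
    Measurable (birkhoffAverage ℝ τ g n) :=
  (measurable_birkhoffSum hτ hg n).const_smul (n : ℝ)⁻¹

theorem measurable_birkhoffAverageMax (hτ : Measurable τ) (hg : Measurable g) (n : ℕ) :
    Measurable (birkhoffAverageMax τ g n) :=
  Finset.measurable_range_sup' fun k _ => measurable_birkhoffAverage hτ hg (k + 1)

theorem memLp_birkhoffAverageMax {p : ℝ≥0∞} (hτ : MeasurePreserving τ μ μ) (hg : MemLp g p μ)
    (n : ℕ) : MemLp (birkhoffAverageMax τ g n) p μ :=
  MemLp.finset_sup' _ fun k _ => (memLp_birkhoffSum hτ hg (k + 1)).const_smul ((k + 1 : ℕ) : ℝ)⁻¹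

theorem ofReal_mul_measure_lt_birkhoffAverageMax_le [IsFiniteMeasure μ]
    (hτ : MeasurePreserving τ μ μ) (hgm : Measurable g) (hg : Integrable g μ) (hg0 : 0 ≤ g)
    {t : ℝ} (ht : 0 ≤ t) (n : ℕ) :
    ENNReal.ofReal t * μ {x | t < birkhoffAverageMax τ g n x} ≤
      ∫⁻ x in {x | t < birkhoffAverageMax τ g n x}, ENNReal.ofReal (g x) ∂μ := by
  have hhopf : 0 ≤ ∫ x in {x | t < birkhoffAverageMax τ g n x}, (g x - t) ∂μ := by
    rw [setOf_lt_birkhoffAverageMax]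
    exact setIntegral_birkhoffMax_pos_nonneg hτ (hgm.sub_const t) (hg.sub (integrable_const t)) _
  set E := {x | t < birkhoffAverageMax τ g n x}
  rw [integral_sub hg.integrableOn (integrableOn_const (measure_ne_top μ E)), setIntegral_const,
    smul_eq_mul, sub_nonneg] at hhopf
  rw [← ofReal_integral_eq_lintegral_ofReal hg.integrableOn (ae_of_all _ hg0),
    ← ENNReal.ofReal_toReal (measure_ne_top μ E), ← ENNReal.ofReal_mul ht, mul_comm]
  exact ENNReal.ofReal_le_ofReal hhopf

end BirkhoffAverage

section WeakType

variable {α : Type*} [MeasurableSpace α] {μ : Measure α} {F : α → ℝ} {w : α → ℝ≥0∞} {q : ℝ}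

theorem lintegral_ofReal_rpow_eq_lintegral_meas_lt_mul (ν : Measure α) (hF : Measurable F)
    (hF0 : 0 ≤ F) {r : ℝ} (hr : 0 < r) :
    ∫⁻ x, ENNReal.ofReal (F x) ^ r ∂ν =
      ENNReal.ofReal r * ∫⁻ t in Set.Ioi 0, ν {x | t < F x} * ENNReal.ofReal (t ^ (r - 1)) := by
  rw [← lintegral_rpow_eq_lintegral_meas_lt_mul ν (ae_of_all _ hF0) hF.aemeasurable hr]
  exact lintegral_congr fun x => ENNReal.ofReal_rpow_of_nonneg (hF0 x) hr.le

/-- Both sides by the layer-cake formula, the right one for the measure `μ.withDensity w`. -/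
theorem lintegral_rpow_le_mul_lintegral_mul_rpow (hq : 1 < q) (hF : Measurable F) (hF0 : 0 ≤ F)
    (hw : AEMeasurable w μ)
    (hweak : ∀ t > 0, ENNReal.ofReal t * μ {x | t < F x} ≤ ∫⁻ x in {x | t < F x}, w x ∂μ) :
    ∫⁻ x, ENNReal.ofReal (F x) ^ q ∂μ ≤
      ENNReal.ofReal (q / (q - 1)) * ∫⁻ x, w x * ENNReal.ofReal (F x) ^ (q - 1) ∂μ := by
  have hq1 : 0 < q - 1 := by linarith
  set ν := μ.withDensity w
  have htail : ∫⁻ t in Set.Ioi 0, μ {x | t < F x} * ENNReal.ofReal (t ^ (q - 1)) ≤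
      ∫⁻ t in Set.Ioi 0, ν {x | t < F x} * ENNReal.ofReal (t ^ (q - 1 - 1)) := by
    refine setLIntegral_mono' measurableSet_Ioi fun t (ht : 0 < t) => ?_
    rw [withDensity_apply _ (measurableSet_lt measurable_const hF)]
    calc μ {x | t < F x} * ENNReal.ofReal (t ^ (q - 1))
        = ENNReal.ofReal t * μ {x | t < F x} * ENNReal.ofReal (t ^ (q - 1 - 1)) := by
          rw [mul_comm (ENNReal.ofReal t), mul_assoc, ← ENNReal.ofReal_mul ht.le,
            ← Real.rpow_one_add' ht.le (by linarith)]
          ring_nf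
      _ ≤ _ := by gcongr; exact hweak t ht
  calc ∫⁻ x, ENNReal.ofReal (F x) ^ q ∂μ
      = ENNReal.ofReal q * ∫⁻ t in Set.Ioi 0, μ {x | t < F x} * ENNReal.ofReal (t ^ (q - 1)) :=
        lintegral_ofReal_rpow_eq_lintegral_meas_lt_mul μ hF hF0 (by linarith)
    _ ≤ ENNReal.ofReal q *
          ∫⁻ t in Set.Ioi 0, ν {x | t < F x} * ENNReal.ofReal (t ^ (q - 1 - 1)) := by
        gcongr
    _ = ENNReal.ofReal q * (ENNReal.ofReal (q - 1))⁻¹ *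
          ∫⁻ x, ENNReal.ofReal (F x) ^ (q - 1) ∂ν := by
        rw [lintegral_ofReal_rpow_eq_lintegral_meas_lt_mul ν hF hF0 hq1, ← mul_assoc,
          mul_assoc _ _ (ENNReal.ofReal _), ENNReal.inv_mul_cancel (by simpa using hq1)
            ENNReal.ofReal_ne_top, mul_one]
    _ = ENNReal.ofReal (q / (q - 1)) * ∫⁻ x, w x * ENNReal.ofReal (F x) ^ (q - 1) ∂μ := by
        rw [lintegral_withDensity_eq_lintegral_mul₀ hw (hF.ennreal_ofReal.pow_const _).aemeasurable,
          ENNReal.ofReal_div_of_pos hq1, div_eq_mul_inv]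
        rfl

theorem lintegral_rpow_le_of_weak_type (hq : 1 < q) (hF : Measurable F) (hF0 : 0 ≤ F)
    (hw : AEMeasurable w μ)
    (hweak : ∀ t > 0, ENNReal.ofReal t * μ {x | t < F x} ≤ ∫⁻ x in {x | t < F x}, w x ∂μ)
    (hfin : ∫⁻ x, ENNReal.ofReal (F x) ^ q ∂μ ≠ ∞) :
    ∫⁻ x, ENNReal.ofReal (F x) ^ q ∂μ ≤ ENNReal.ofReal (q / (q - 1)) ^ q * ∫⁻ x, w x ^ q ∂μ := by
  have hholder : ∫⁻ x, w x * ENNReal.ofReal (F x) ^ (q - 1) ∂μ ≤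
      (∫⁻ x, w x ^ q ∂μ) ^ (1 / q) * (∫⁻ x, ENNReal.ofReal (F x) ^ q ∂μ) ^ (1 - 1 / q) := by
    have hq1 : q - 1 ≠ 0 := by linarith
    have hpow (x : α) :
        (ENNReal.ofReal (F x) ^ (q - 1)) ^ q.conjExponent = ENNReal.ofReal (F x) ^ q := by
      rw [← ENNReal.rpow_mul, Real.conjExponent]
      field_simp
    have hexp : 1 / q.conjExponent = 1 - 1 / q := by
      rw [Real.conjExponent]
      field_simp
    simpa only [hpow, hexp, Pi.mul_apply] using ENNReal.lintegral_mul_le_Lp_mul_Lq μ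
      (Real.HolderConjugate.conjExponent hq) hw (hF.ennreal_ofReal.pow_const (q - 1)).aemeasurable
  refine ENNReal.le_rpow_mul_of_le_mul_rpow (by linarith) hfin
    ((lintegral_rpow_le_mul_lintegral_mul_rpow hq hF hF0 hw hweak).trans ?_)
  rw [mul_assoc]
  gcongr

end WeakType

section Wiener

variable {α : Type*} [MeasurableSpace α] {μ : Measure α} [IsFiniteMeasure μ] {τ : α → α}
  {g : α → ℝ} {q : ℝ}

theorem lintegral_iSup_birkhoffAverage_rpow_le (hτ : MeasurePreserving τ μ μ)
    (hgm : Measurable g) (hg0 : 0 ≤ g) (hq : 1 < q) (hgq : MemLp g (ENNReal.ofReal q) μ) :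
    ∫⁻ x, ENNReal.ofReal (⨆ n : ℕ, birkhoffAverage ℝ τ g (n + 1) x) ^ q ∂μ ≤
      ENNReal.ofReal (q / (q - 1)) ^ q * ∫⁻ x, ENNReal.ofReal (g x) ^ q ∂μ := by
  have hq0 : 0 < q := by linarith
  have hg : Integrable g μ := hgq.integrable (by simpa using hq.le)
  have hT (n : ℕ) : Measurable (birkhoffAverageMax τ g n) :=
    measurable_birkhoffAverageMax hτ.measurable hgm n
  have hmax (n : ℕ) : ∫⁻ x, ENNReal.ofReal (birkhoffAverageMax τ g n x) ^ q ∂μ ≤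
      ENNReal.ofReal (q / (q - 1)) ^ q * ∫⁻ x, ENNReal.ofReal (g x) ^ q ∂μ :=
    lintegral_rpow_le_of_weak_type hq (hT n) (birkhoffAverageMax_nonneg hg0 n)
      hgm.ennreal_ofReal.aemeasurable
      (fun t ht => ofReal_mul_measure_lt_birkhoffAverageMax_le hτ hgm hg hg0 ht.le n)
      ((memLp_birkhoffAverageMax hτ hgq n).lintegral_ofReal_rpow_lt_top
        (birkhoffAverageMax_nonneg hg0 n) hq0).ne
  calc ∫⁻ x, ENNReal.ofReal (⨆ n : ℕ, birkhoffAverage ℝ τ g (n + 1) x) ^ q ∂μ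
      ≤ ∫⁻ x, ⨆ n : ℕ, ENNReal.ofReal (birkhoffAverageMax τ g n x) ^ q ∂μ :=
        lintegral_mono fun x => ofReal_iSup_birkhoffAverage_rpow_le hq0 x
    _ = ⨆ n : ℕ, ∫⁻ x, ENNReal.ofReal (birkhoffAverageMax τ g n x) ^ q ∂μ :=
        lintegral_iSup (fun n => (hT n).ennreal_ofReal.pow_const q) fun _ _ hmn x =>
          ENNReal.rpow_le_rpow (ENNReal.ofReal_le_ofReal (monotone_birkhoffAverageMax x hmn)) hq0.le
    _ ≤ _ := iSup_le hmax

theorem memLp_iSup_birkhoffAverage (hτ : MeasurePreserving τ μ μ) (hgm : Measurable g)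
    (hg0 : 0 ≤ g) (hq : 1 < q) (hgq : MemLp g (ENNReal.ofReal q) μ) :
    MemLp (fun x => ⨆ n : ℕ, birkhoffAverage ℝ τ g (n + 1) x) (ENNReal.ofReal q) μ := by
  have hq0 : 0 < q := by linarith
  have hW0 (x : α) : 0 ≤ ⨆ n : ℕ, birkhoffAverage ℝ τ g (n + 1) x :=
    Real.iSup_nonneg fun n => birkhoffAverage_nonneg hg0 (n + 1) x
  refine ⟨(Measurable.iSup fun n =>
    measurable_birkhoffAverage hτ.measurable hgm (n + 1)).aestronglyMeasurable, ?_⟩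
  rw [eLpNorm_lt_top_iff_lintegral_rpow_enorm_lt_top (by simpa using hq0) ENNReal.ofReal_ne_top,
    ENNReal.toReal_ofReal hq0.le]
  simp_rw [Real.enorm_of_nonneg (hW0 _)]
  refine (lintegral_iSup_birkhoffAverage_rpow_le hτ hgm hg0 hq hgq).trans_lt
    (ENNReal.mul_lt_top (by finiteness) (hgq.lintegral_ofReal_rpow_lt_top hg0 hq0))

end Wiener

/-- Wiener's Dominated Ergodic Theorem: if `f ≥ 0` lies in `L^p(μ)` for all `p ≥ 1` and
`τ` preserves the probability measure `μ`, then the ergodic maximal function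
`W* = sup_ℓ (1/ℓ)Σ_{j<ℓ} f∘τ^j` lies in `L^p(μ)` for all `p ≥ 1`. -/
theorem wiener_dominated_ergodic
    {α : Type*} [MeasurableSpace α] (μ : Measure α) [IsProbabilityMeasure μ]
    (τ : α → α) (hτ : MeasurePreserving τ μ μ)
    (f : α → ℝ) (hf : ∀ x, 0 ≤ f x)
    (hfLp : ∀ p : ℝ, 1 ≤ p → MemLp f (ENNReal.ofReal p) μ) :
    ∀ p : ℝ, 1 ≤ p →
      MemLp (fun x => ⨆ ℓ : ℕ,
        (1 / ((ℓ : ℝ) + 1)) * ∑ j ∈ Finset.range (ℓ + 1), f (τ^[j] x))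
        (ENNReal.ofReal p) μ := by
  intro p hp
  obtain ⟨g, hgm, hg0, hfg⟩ : ∃ g : α → ℝ, Measurable g ∧ 0 ≤ g ∧ f =ᵐ[μ] g := by
    have hf' := (hfLp 1 le_rfl).aestronglyMeasurable.aemeasurable
    refine ⟨fun x => max (hf'.mk f x) 0, hf'.measurable_mk.max measurable_const,
      fun x => le_max_right _ _, hf'.ae_eq_mk.mono fun x hx => ?_⟩
    simp [← hx, hf x]
  have hW : (fun x => ⨆ ℓ : ℕ, birkhoffAverage ℝ τ g (ℓ + 1) x) =ᵐ[μ]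
      fun x => ⨆ ℓ : ℕ, (1 / ((ℓ : ℝ) + 1)) * ∑ j ∈ Finset.range (ℓ + 1), f (τ^[j] x) := by
    have hfg_orbit : ∀ᵐ x ∂μ, ∀ j : ℕ, g (τ^[j] x) = f (τ^[j] x) :=
      ae_all_iff.2 fun j => (hτ.iterate j).quasiMeasurePreserving.ae_eq_comp hfg.symm
    filter_upwards [hfg_orbit] with x hx
    simp [birkhoffAverage, birkhoffSum, hx]
  have hgLp : MemLp g (ENNReal.ofReal (p + 1)) μ := (hfLp (p + 1) (by linarith)).ae_eq hfg
  exact ((memLp_iSup_birkhoffAverage hτ hgm hg0 (by linarith) hgLp).mono_exponent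
    (ENNReal.ofReal_le_ofReal (by linarith))).ae_eq hW
end
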